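/- arXiv:2405.13390 — 2 statements merged into one kernel-verified Lean document; each statement's English description precedes it below -/
import Mathlib

section
/- Let K : ℝ^d → ℝ be integrable and bounded with ‖u‖^d K(u) → 0 as ‖u‖ → ∞ (‖·‖ the Euclidean norm), and let g : ℝ^d → ℝ be bounded and measurable and continuous at a point x ∈ ℝ^d. Then lim_{h → 0⁺} h^{−d} ∫_{ℝ^d} K((x−y)/h) g(y) dy = g(x) ∫_{ℝ^d} K(u) du. -/
/-! The substitution `y = x - h • u` turns the rescaled integral into
`∫ K u * g (x - h • u) du`, and since `|K u * g (x - h • u)| ≤ |K u| * sup |g|` with `K`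
integrable, dominated convergence lets `h → 0` inside the integral. -/

open MeasureTheory Filter Topology

theorem integral_comp_sub_smul {E F : Type*} [NormedAddCommGroup E] [NormedSpace ℝ E]
    [FiniteDimensional ℝ E] [MeasurableSpace E] [BorelSpace E]
    [NormedAddCommGroup F] [NormedSpace ℝ F] (μ : Measure E) [μ.IsAddHaarMeasure]
    (f : E → F) (x : E) (h : ℝ) :
    ∫ u, f (x - h • u) ∂μ = |(h ^ Module.finrank ℝ E)⁻¹| • ∫ y, f y ∂μ := by
  rw [Measure.integral_comp_smul μ (fun v => f (x - v)) h, integral_sub_left_eq_self]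

theorem tendsto_integral_smul_comp_sub_smul {E F : Type*} [NormedAddCommGroup E]
    [NormedSpace ℝ E] [MeasurableSpace E] [BorelSpace E]
    [NormedAddCommGroup F] [NormedSpace ℝ F] [CompleteSpace F] {μ : Measure E}
    {K : E → ℝ} (hK : Integrable K μ) {g : E → F} (hg : StronglyMeasurable g) {C : ℝ}
    (hgC : ∀ u, ‖g u‖ ≤ C) {x : E} (hgx : ContinuousAt g x) :
    Tendsto (fun h : ℝ => ∫ u, K u • g (x - h • u) ∂μ) (𝓝 0)
      (𝓝 ((∫ u, K u ∂μ) • g x)) := by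
  rw [← integral_smul_const]
  refine tendsto_integral_filter_of_dominated_convergence (fun u => ‖K u‖ * C)
    (Eventually.of_forall fun h => hK.aestronglyMeasurable.smul ?_)
    (Eventually.of_forall fun h => ae_of_all _ fun u => ?_) (hK.norm.mul_const C)
    (ae_of_all _ fun u => ?_)
  · have hcont : Continuous fun u : E => x - h • u := by fun_prop
    exact (hg.comp_measurable hcont.measurable).aestronglyMeasurable
  · rw [norm_smul]
    exact mul_le_mul_of_nonneg_left (hgC _) (norm_nonneg _)
  · have hshift : Tendsto (fun h : ℝ => x - h • u) (𝓝 0) (𝓝 x) := by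
      have hcont : Continuous fun h : ℝ => x - h • u := by fun_prop
      simpa using hcont.tendsto 0
    exact tendsto_const_nhds.smul (hgx.tendsto.comp hshift)

theorem bochner_approximation_general {d : ℕ}
    (K : EuclideanSpace ℝ (Fin d) → ℝ) (hKint : Integrable K)
    (g : EuclideanSpace ℝ (Fin d) → ℝ) (hgmeas : Measurable g)
    (hgbdd : ∃ C, ∀ u, |g u| ≤ C)
    (x : EuclideanSpace ℝ (Fin d)) (hgx : ContinuousAt g x) :
    Tendsto
      (fun h : ℝ => (h ^ d)⁻¹ * ∫ y : EuclideanSpace ℝ (Fin d), K (h⁻¹ • (x - y)) * g y)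
      (nhdsWithin 0 (Set.Ioi 0))
      (nhds (g x * ∫ u : EuclideanSpace ℝ (Fin d), K u)) := by
  obtain ⟨C, hC⟩ := hgbdd
  have hlim := (tendsto_integral_smul_comp_sub_smul hKint hgmeas.stronglyMeasurable hC
    hgx).mono_left (nhdsWithin_le_nhds (s := Set.Ioi 0))
  rw [smul_eq_mul, mul_comm] at hlim
  refine hlim.congr' (eventually_nhdsWithin_of_forall fun h (hh : 0 < h) => ?_)
  have hsub := integral_comp_sub_smul volume (fun y => K (h⁻¹ • (x - y)) * g y) x h
  simpa only [sub_sub_cancel, inv_smul_smul₀ hh.ne', finrank_euclideanSpace_fin,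
    abs_of_pos (inv_pos.2 (pow_pos hh d)), smul_eq_mul] using hsub

/-- Bochner-type approximation lemma in `ℝ^d`: if `K` is integrable and bounded with
`‖u‖^d K(u) → 0` as `‖u‖ → ∞`, and `g` is bounded, measurable and continuous at `x`, then
`h^{−d} ∫ K((x−y)/h) g(y) dy → g(x) ∫ K(u) du` as `h → 0⁺`. -/
theorem bochner_approximation {d : ℕ}
    (K : EuclideanSpace ℝ (Fin d) → ℝ) (hKint : Integrable K)
    (hKbdd : ∃ C, ∀ u, |K u| ≤ C)
    (hKtail : Tendsto (fun u : EuclideanSpace ℝ (Fin d) => ‖u‖ ^ d * K u)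
      (Filter.comap norm Filter.atTop) (nhds 0))
    (g : EuclideanSpace ℝ (Fin d) → ℝ) (hgmeas : Measurable g)
    (hgbdd : ∃ C, ∀ u, |g u| ≤ C)
    (x : EuclideanSpace ℝ (Fin d)) (hgx : ContinuousAt g x) :
    Tendsto
      (fun h : ℝ => (h ^ d)⁻¹ * ∫ y : EuclideanSpace ℝ (Fin d), K (h⁻¹ • (x - y)) * g y)
      (nhdsWithin 0 (Set.Ioi 0))
      (nhds (g x * ∫ u : EuclideanSpace ℝ (Fin d), K u)) :=
  bochner_approximation_general K hKint g hgmeas hgbdd x hgx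
end

section
/- Let Z₁,…,Z_N be i.i.d. real random variables with ε ≤ Z_i ≤ C almost surely for some constants 0 < ε ≤ C, let S̄ = (1/N) Σ_{i=1}^{N} Z_i and a = E[Z₁]. Then | E[1/S̄²] − 1/a² | ≤ 3 Var(Z₁)/(ε⁴ N). -/
open MeasureTheory ProbabilityTheory Finset

/-! The first-order Taylor expansion of `s ↦ 1 / s²` at `a` has the exact remainder
`(2s + a)(s - a)² / (s² a³)`, which is at most `3 (s - a)² / ε⁴` when `s, a ≥ ε`. At `a = E[S̄]`
the linear term has mean zero, so `|E[1 / S̄²] - 1 / a²| ≤ 3 Var(S̄) / ε⁴`, and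
`Var(S̄) = Var(Z₁) / N` for independent identically distributed samples. -/

theorem abs_one_div_sq_sub_taylor_le {s a ε : ℝ} (hε : 0 < ε) (hs : ε ≤ s) (ha : ε ≤ a) :
    |1 / s ^ 2 - 1 / a ^ 2 + 2 / a ^ 3 * (s - a)| ≤ 3 / ε ^ 4 * (s - a) ^ 2 := by
  have hs0 : 0 < s := hε.trans_le hs
  have ha0 : 0 < a := hε.trans_le ha
  have hremainder : 1 / s ^ 2 - 1 / a ^ 2 + 2 / a ^ 3 * (s - a)
      = (2 * s + a) / (s ^ 2 * a ^ 3) * (s - a) ^ 2 := by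
    field_simp; ring
  have hcoeff : (2 * s + a) / (s ^ 2 * a ^ 3) ≤ 3 / ε ^ 4 := by
    rw [div_le_div_iff₀ (by positivity) (by positivity)]
    have e1 : ε ^ 4 ≤ s * a ^ 3 := by
      nlinarith [pow_le_pow_left₀ hε.le ha 3, pow_pos hε 3]
    have e2 : ε ^ 4 ≤ s ^ 2 * a ^ 2 := by
      nlinarith [pow_le_pow_left₀ hε.le hs 2, pow_le_pow_left₀ hε.le ha 2, pow_pos hε 2]
    -- `(2s + a) ε⁴ ≤ 2s · s a³ + a · s² a²`
    nlinarith [mul_le_mul_of_nonneg_left e1 hs0.le, mul_le_mul_of_nonneg_left e2 ha0.le]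
  rw [hremainder, abs_of_nonneg (by positivity)]
  exact mul_le_mul_of_nonneg_right hcoeff (sq_nonneg _)

theorem le_inv_mul_sum_of_le {N : ℕ} (hN : 0 < N) {f : Fin N → ℝ} {c : ℝ}
    (hf : ∀ i, c ≤ f i) :
    c ≤ (N : ℝ)⁻¹ * ∑ i, f i := by
  have hN' : (0 : ℝ) < N := Nat.cast_pos.mpr hN
  rw [le_inv_mul_iff₀ hN']
  simpa using Finset.card_nsmul_le_sum univ f c fun i _ => hf i

section Moments

variable {Ω : Type*} [MeasurableSpace Ω] {μ : Measure Ω}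

theorem abs_integral_one_div_sq_sub_le_variance [IsProbabilityMeasure μ] {S : Ω → ℝ} {ε : ℝ}
    (hS : MemLp S 2 μ) (hε : 0 < ε) (hSε : ∀ᵐ ω ∂μ, ε ≤ S ω) :
    |∫ ω, 1 / S ω ^ 2 ∂μ - 1 / (μ[S]) ^ 2| ≤ 3 / ε ^ 4 * variance S μ := by
  set a := μ[S]
  have hSint : Integrable S μ := hS.integrable one_le_two
  have haε : ε ≤ a := by
    simpa using integral_mono_ae (integrable_const ε) hSint hSε
  have hinv_int : Integrable (fun ω => 1 / S ω ^ 2) μ := by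
    have hmeas : AEMeasurable (fun ω => 1 / S ω ^ 2) μ :=
      aemeasurable_const.div (hS.aestronglyMeasurable.aemeasurable.pow_const 2)
    refine Integrable.of_bound hmeas.aestronglyMeasurable (1 / ε ^ 2) ?_
    filter_upwards [hSε] with ω hω
    rw [Real.norm_eq_abs, abs_of_nonneg (by positivity)]
    exact one_div_le_one_div_of_le (by positivity) (pow_le_pow_left₀ hε.le hω 2)
  have hlin_int : Integrable (fun ω => 2 / a ^ 3 * (S ω - a)) μ :=
    (hSint.sub (integrable_const a)).const_mul _
  have hlin_zero : ∫ ω, 2 / a ^ 3 * (S ω - a) ∂μ = 0 := by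
    rw [integral_const_mul, integral_sub hSint (integrable_const a)]
    simp [a]
  have hdiff_int : Integrable (fun ω => 1 / S ω ^ 2 - 1 / a ^ 2) μ :=
    hinv_int.sub (integrable_const _)
  have hsq_int : Integrable (fun ω => 3 / ε ^ 4 * (S ω - a) ^ 2) μ :=
    ((hS.sub (memLp_const a)).integrable_sq).const_mul _
  have hsplit : ∫ ω, 1 / S ω ^ 2 ∂μ - 1 / a ^ 2
      = ∫ ω, (1 / S ω ^ 2 - 1 / a ^ 2 + 2 / a ^ 3 * (S ω - a)) ∂μ := by
    rw [integral_add hdiff_int hlin_int, integral_sub hinv_int (integrable_const _), hlin_zero]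
    simp
  have hremainder : ∀ᵐ ω ∂μ,
      |1 / S ω ^ 2 - 1 / a ^ 2 + 2 / a ^ 3 * (S ω - a)| ≤ 3 / ε ^ 4 * (S ω - a) ^ 2 := by
    filter_upwards [hSε] with ω hω using abs_one_div_sq_sub_taylor_le hε hω haε
  rw [hsplit, variance_eq_integral hS.aestronglyMeasurable.aemeasurable, ← integral_const_mul]
  exact (abs_integral_le_integral_abs).trans
    (integral_mono_ae (hdiff_int.add hlin_int).abs hsq_int hremainder)

theorem variance_inv_mul_sum_of_pairwise_indepFun [IsFiniteMeasure μ] {N : ℕ}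
    {Z : Fin N → Ω → ℝ} {v : ℝ} (hZ : ∀ i, MemLp (Z i) 2 μ)
    (hindep : Pairwise fun i j => IndepFun (Z i) (Z j) μ) (hvar : ∀ i, variance (Z i) μ = v) :
    variance (fun ω => (N : ℝ)⁻¹ * ∑ i, Z i ω) μ = v / N := by
  have hsum : variance (∑ i, Z i) μ = N * v := by
    rw [IndepFun.variance_sum (fun i _ => hZ i) (fun i _ j _ hij => hindep hij)]
    simp [hvar]
  have hS : (fun ω => (N : ℝ)⁻¹ * ∑ i, Z i ω) = (N : ℝ)⁻¹ • ∑ i, Z i := by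
    funext ω; simp [Finset.sum_apply]
  rw [hS, variance_smul, hsum]
  rcases N.eq_zero_or_pos with rfl | hN
  · simp
  · field_simp

end Moments

theorem inverse_squared_empirical_mean_bound_general {N : ℕ} (hN : 0 < N)
    {Ω : Type*} [MeasureSpace Ω] [IsProbabilityMeasure (ℙ : Measure Ω)]
    (Z : Fin N → Ω → ℝ)
    (hZmeas : ∀ i, Measurable (Z i))
    (hZindep : iIndepFun Z ℙ)
    (hZid : ∀ i j, Measure.map (Z i) ℙ = Measure.map (Z j) ℙ)
    {ε C : ℝ} (hε : 0 < ε)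
    (hbdd : ∀ᵐ ω ∂ℙ, ∀ i, ε ≤ Z i ω ∧ Z i ω ≤ C)
    {a : ℝ} (ha : a = ∫ ω, Z ⟨0, hN⟩ ω ∂ℙ) :
    |(∫ ω, 1 / (((N : ℝ))⁻¹ * ∑ i, Z i ω) ^ 2 ∂ℙ) - 1 / a ^ 2|
      ≤ 3 * variance (Z ⟨0, hN⟩) ℙ / (ε ^ 4 * N) := by
  set S : Ω → ℝ := fun ω => (N : ℝ)⁻¹ * ∑ i, Z i ω
  have hident : ∀ i, IdentDistrib (Z i) (Z ⟨0, hN⟩) ℙ ℙ := fun i =>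
    ⟨(hZmeas i).aemeasurable, (hZmeas _).aemeasurable, hZid i _⟩
  have hZmem : ∀ i, MemLp (Z i) 2 ℙ := fun i => by
    refine MemLp.of_bound (hZmeas i).aestronglyMeasurable C ?_
    filter_upwards [hbdd] with ω hω
    exact abs_le.mpr ⟨by linarith [hω i], (hω i).2⟩
  have hSmem : MemLp S 2 ℙ := (memLp_finsetSum univ fun i _ => hZmem i).const_mul _
  have hSε : ∀ᵐ ω ∂ℙ, ε ≤ S ω := by
    filter_upwards [hbdd] with ω hω using le_inv_mul_sum_of_le hN fun i => (hω i).1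
  have hSmean : ℙ[S] = a := by
    rw [integral_const_mul, integral_finsetSum _ fun i _ => (hZmem i).integrable one_le_two]
    simp only [fun i => (hident i).integral_eq, sum_const, card_univ, Fintype.card_fin,
      nsmul_eq_mul, ha]
    field_simp
  have hSvar : variance S ℙ = variance (Z ⟨0, hN⟩) ℙ / N :=
    variance_inv_mul_sum_of_pairwise_indepFun hZmem (fun i j hij => hZindep.indepFun hij)
      fun i => (hident i).variance_eq
  have hbound := abs_integral_one_div_sq_sub_le_variance hSmem hε hSε
  rw [hSmean, hSvar] at hbound
  calc _ ≤ 3 / ε ^ 4 * (variance (Z ⟨0, hN⟩) ℙ / N) := hbound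
    _ = 3 * variance (Z ⟨0, hN⟩) ℙ / (ε ^ 4 * N) := by ring

/-- Control of the inverse squared empirical mean: if `Z₁,…,Z_N` are i.i.d. real random
variables with `ε ≤ Zᵢ ≤ C` a.s. (`0 < ε ≤ C`), `S̄ = (1/N)ΣᵢZᵢ` and `a = E[Z₁]`, then
`|E[1/S̄²] − 1/a²| ≤ 3 Var(Z₁)/(ε⁴ N)`. -/
theorem inverse_squared_empirical_mean_bound {N : ℕ} (hN : 0 < N)
    {Ω : Type*} [MeasureSpace Ω] [IsProbabilityMeasure (ℙ : Measure Ω)]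
    (Z : Fin N → Ω → ℝ)
    (hZmeas : ∀ i, Measurable (Z i))
    (hZindep : iIndepFun Z ℙ)
    (hZid : ∀ i j, Measure.map (Z i) ℙ = Measure.map (Z j) ℙ)
    {ε C : ℝ} (hε : 0 < ε) (hεC : ε ≤ C)
    (hbdd : ∀ᵐ ω ∂ℙ, ∀ i, ε ≤ Z i ω ∧ Z i ω ≤ C)
    {a : ℝ} (ha : a = ∫ ω, Z ⟨0, hN⟩ ω ∂ℙ) :
    |(∫ ω, 1 / (((N : ℝ))⁻¹ * ∑ i, Z i ω) ^ 2 ∂ℙ) - 1 / a ^ 2|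
      ≤ 3 * variance (Z ⟨0, hN⟩) ℙ / (ε ^ 4 * N) :=
  inverse_squared_empirical_mean_bound_general hN Z hZmeas hZindep hZid hε hbdd ha
end
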